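/- arXiv:1004.0656 — 5 statements merged into one kernel-verified Lean document; each statement's English description precedes it below -/
import Mathlib

section
/- The largest modulus of a complex root of the polynomial (X-1)^4 (X+1)^2 (X^2 - X + 1)(X^2 + X + 1)^3 (X^2 - 3X + 1) equals (3 + sqrt 5)/2. -/
open Polynomial

/-!
The first four factors divide `X ^ 6 - 1`, so their roots have modulus one, while
`X ^ 2 - 3 X + 1` has the two real roots `(3 ± √5) / 2`. The spectral radius is therefore the
larger of these, which exceeds one.
-/

lemma Complex.sq_sub_three_mul_add_one_eq_zero_iff (z : ℂ) :
    z ^ 2 - 3 * z + 1 = 0 ↔ z = ((3 + √5) / 2 : ℝ) ∨ z = ((3 - √5) / 2 : ℝ) := by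
  have hsq : ((√5 : ℝ) : ℂ) ^ 2 = 5 := by
    rw [← Complex.ofReal_pow, Real.sq_sqrt (by norm_num)]
    norm_num
  have hfactor : z ^ 2 - 3 * z + 1 =
      (z - ((3 + √5) / 2 : ℝ)) * (z - ((3 - √5) / 2 : ℝ)) := by
    push_cast
    linear_combination (1 / 4 : ℂ) * hsq
  rw [hfactor, mul_eq_zero, sub_eq_zero, sub_eq_zero]

lemma isRoot_iff_pow_six_eq_one_or_sq_sub_three_mul_add_one_eq_zero (z : ℂ) :
    ((X - 1) ^ 4 * (X + 1) ^ 2 * (X ^ 2 - X + 1) * (X ^ 2 + X + 1) ^ 3 *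
        (X ^ 2 - C (3 : ℂ) * X + 1) : ℂ[X]).IsRoot z ↔
      z ^ 6 = 1 ∨ z ^ 2 - 3 * z + 1 = 0 := by
  have hsix : z ^ 6 - 1 = (z - 1) * (z + 1) * (z ^ 2 - z + 1) * (z ^ 2 + z + 1) := by ring
  simp only [IsRoot, eval_mul, eval_pow, eval_add, eval_sub, eval_one, eval_X, eval_C,
    mul_eq_zero, pow_eq_zero_iff (by norm_num : (4 : ℕ) ≠ 0),
    pow_eq_zero_iff (by norm_num : (2 : ℕ) ≠ 0), pow_eq_zero_iff (by norm_num : (3 : ℕ) ≠ 0),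
    ← sub_eq_zero (a := z ^ 6), hsix]

/-- The largest modulus of a complex root of the polynomial
`(X-1)^4 (X+1)^2 (X^2 - X + 1)(X^2 + X + 1)^3 (X^2 - 3X + 1)` equals `(3 + sqrt 5)/2`. -/
theorem stmt3 :
    IsGreatest
      {r : ℝ | ∃ z : ℂ,
        ((X - 1) ^ 4 * (X + 1) ^ 2 * (X ^ 2 - X + 1) * (X ^ 2 + X + 1) ^ 3 *
          (X ^ 2 - C (3 : ℂ) * X + 1) : Polynomial ℂ).IsRoot z ∧ ‖z‖ = r}
      ((3 + Real.sqrt 5) / 2) := by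
  have hsqrt : √5 ≤ 3 := Real.sqrt_le_iff.2 ⟨by norm_num, by norm_num⟩
  have hone : 1 ≤ (3 + √5) / 2 := by linarith [Real.sqrt_nonneg 5]
  refine ⟨⟨_, (isRoot_iff_pow_six_eq_one_or_sq_sub_three_mul_add_one_eq_zero _).2 <| Or.inr <|
      (Complex.sq_sub_three_mul_add_one_eq_zero_iff _).2 (Or.inl rfl), ?_⟩, ?_⟩
  · rw [Complex.norm_real, Real.norm_of_nonneg (by linarith)]
  rintro r ⟨z, hz, rfl⟩
  rcases (isRoot_iff_pow_six_eq_one_or_sq_sub_three_mul_add_one_eq_zero z).1 hz with h6 | hquad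
  · rwa [Complex.norm_eq_one_of_pow_eq_one h6 (by norm_num)]
  rcases (Complex.sq_sub_three_mul_add_one_eq_zero_iff z).1 hquad with rfl | rfl
  · rw [Complex.norm_real, Real.norm_of_nonneg (by linarith)]
  · rw [Complex.norm_real, Real.norm_of_nonneg (by linarith)]
    linarith [Real.sqrt_nonneg 5]
end

section
/- For δ a complex number with (1+δ)^{3n} = -1, n ≥ 3, α ∈ C*, β ∈ C, the projective matrix φ = [[1, 2β/α, -(1+δ+δ²)/α],[0,-1,0],[α,β,δ]] satisfies: the point P = (1:0:0) is a fixed point of (φ∘Φ_n)²∘φ, where Φ_n(x:y:z) = (x z^{n-1}+y^n : y z^{n-1} : z^n). -/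
/-! Write `powMap n` for `Φ_n` and `linMap α β δ` for `φ` on homogeneous coordinates.
Every point of the line `y = 0` is fixed by `Φ_n`, since `Φ_n(x : 0 : z) = z^(n-1) (x : 0 : z)`.
On that line `φ` sends `P = (1:0:0)` to `(1:0:α)`, `(1:0:α)` to `Q = (δ:0:-α)`, and `Q` back to
`P`; the scalars that appear are products of powers of `α` and `1+δ`, which do not vanish. -/

variable {K : Type*} [Field K]

def powMap (n : ℕ) (v : K × K × K) : K × K × K :=
  (v.1 * v.2.2 ^ (n - 1) + v.2.1 ^ n, v.2.1 * v.2.2 ^ (n - 1), v.2.2 ^ n)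

def linMap (α β δ : K) (v : K × K × K) : K × K × K :=
  (v.1 + (2 * β / α) * v.2.1 - ((1 + δ + δ ^ 2) / α) * v.2.2,
    -v.2.1, α * v.1 + β * v.2.1 + δ * v.2.2)

theorem powMap_smul {n : ℕ} (hn : n ≠ 0) (c : K) (v : K × K × K) :
    powMap n (c • v) = c ^ n • powMap n v := by
  obtain ⟨m, rfl⟩ : ∃ m, n = m + 1 := ⟨n - 1, by omega⟩
  obtain ⟨x, y, z⟩ := v
  simp only [powMap, Prod.smul_mk, smul_eq_mul, Nat.add_sub_cancel, Prod.mk.injEq]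
  refine ⟨?_, ?_, ?_⟩ <;> ring

theorem powMap_mid_zero {n : ℕ} (hn : n ≠ 0) (x z : K) :
    powMap n (x, 0, z) = z ^ (n - 1) • (x, 0, z) := by
  obtain ⟨m, rfl⟩ : ∃ m, n = m + 1 := ⟨n - 1, by omega⟩
  simp only [powMap, zero_pow hn, Nat.add_sub_cancel, Prod.smul_mk, smul_eq_mul, Prod.mk.injEq]
  refine ⟨?_, ?_, ?_⟩ <;> ring

theorem linMap_smul (α β δ c : K) (v : K × K × K) :
    linMap α β δ (c • v) = c • linMap α β δ v := by
  obtain ⟨x, y, z⟩ := v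
  simp only [linMap, Prod.smul_mk, smul_eq_mul, Prod.mk.injEq]
  refine ⟨?_, ?_, ?_⟩ <;> ring

theorem linMap_one_zero_zero (α β δ : K) : linMap α β δ (1, 0, 0) = (1, 0, α) := by
  simp [linMap]

theorem linMap_one_zero_self {α : K} (hα : α ≠ 0) (β δ : K) :
    linMap α β δ (1, 0, α) = -(1 + δ) • (δ, 0, -α) := by
  simp only [linMap, Prod.smul_mk, smul_eq_mul, Prod.mk.injEq]
  refine ⟨?_, by ring, by ring⟩
  field_simp
  ring

theorem linMap_self_zero_neg {α : K} (hα : α ≠ 0) (β δ : K) :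
    linMap α β δ (δ, 0, -α) = ((1 + δ) ^ 2, 0, 0) := by
  simp only [linMap, Prod.mk.injEq]
  refine ⟨?_, by ring, by ring⟩
  field_simp
  ring

/-- For `δ ∈ ℂ` with `(1+δ)^(3n) = -1`, `n ≥ 3`, `α ∈ ℂ*`, `β ∈ ℂ`, the projective matrix
`φ = [[1, 2β/α, -(1+δ+δ²)/α],[0,-1,0],[α,β,δ]]` satisfies: the point `P = (1:0:0)` is a
fixed point of `(φ ∘ Φ_n)² ∘ φ`, where `Φ_n(x:y:z) = (x z^(n-1)+y^n : y z^(n-1) : z^n)`.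
In homogeneous coordinates: `((φΦ_n)²φ)(1,0,0)` is a nonzero scalar multiple of `(1,0,0)`. -/
theorem stmt13 (n : ℕ) (hn : 3 ≤ n) (α β δ : ℂ) (hα : α ≠ 0)
    (hδ : (1 + δ) ^ (3 * n) = -1)
    (Φ : ℂ × ℂ × ℂ → ℂ × ℂ × ℂ)
    (hΦ : Φ = fun v => (v.1 * v.2.2 ^ (n - 1) + v.2.1 ^ n, v.2.1 * v.2.2 ^ (n - 1), v.2.2 ^ n))
    (φ : ℂ × ℂ × ℂ → ℂ × ℂ × ℂ)
    (hφ : φ = fun v => (v.1 + (2 * β / α) * v.2.1 - ((1 + δ + δ ^ 2) / α) * v.2.2,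
      -v.2.1, α * v.1 + β * v.2.1 + δ * v.2.2)) :
    ∃ c : ℂ, c ≠ 0 ∧ φ (Φ (φ (Φ (φ (1, 0, 0))))) = (c, 0, 0) := by
  have hn0 : n ≠ 0 := by omega
  have hδ0 : 1 + δ ≠ 0 := by
    intro h
    rw [h, zero_pow (by omega)] at hδ
    norm_num at hδ
  obtain rfl : Φ = powMap n := hΦ
  obtain rfl : φ = linMap α β δ := hφ
  rw [linMap_one_zero_zero, powMap_mid_zero hn0, linMap_smul, linMap_one_zero_self hα, smul_smul,
    powMap_smul hn0, powMap_mid_zero hn0, smul_smul, linMap_smul, linMap_self_zero_neg hα]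
  refine ⟨_, ?_, by rw [Prod.smul_mk, Prod.smul_mk, smul_zero, smul_eq_mul]⟩
  simp [hα, hδ0, -neg_add_rev]
end

section
/- For α, α_0 ∈ C\{0,1}, the matrices M_α = [[1,0,α_0-α],[0,1,0],[0,0,1]] satisfy M_α ∘ (φ_α ∘ Φ_3) = (φ_{α_0} ∘ Φ_3) ∘ M_α as rational maps of P^2, where φ_α = [[α, 2(1-α), 2+α-α²],[-1,0,α+1],[1,-2,1-α]] and Φ_3(x:y:z)=(xz²+y³ : yz² : z³). Hence φ_α Φ_3 and φ_{α_0} Φ_3 are linearly conjugate. -/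
/-- For `α, α₀ ∈ ℂ \ {0,1}`, the matrices `M_α = [[1,0,α₀-α],[0,1,0],[0,0,1]]` satisfy
`M_α ∘ (φ_α ∘ Φ₃) = (φ_{α₀} ∘ Φ₃) ∘ M_α` as rational maps of `P²`, where
`φ_α = [[α, 2(1-α), 2+α-α²],[-1,0,α+1],[1,-2,1-α]]` and `Φ₃(x:y:z) = (xz²+y³ : yz² : z³)`.
Equality of rational maps means the defining polynomial triples are proportional. -/
theorem stmt14 (α α₀ : ℂ) (hα : α ≠ 0 ∧ α ≠ 1) (hα₀ : α₀ ≠ 0 ∧ α₀ ≠ 1)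
    (Φ : ℂ × ℂ × ℂ → ℂ × ℂ × ℂ)
    (hΦ : Φ = fun v => (v.1 * v.2.2 ^ 2 + v.2.1 ^ 3, v.2.1 * v.2.2 ^ 2, v.2.2 ^ 3))
    (φ : ℂ → ℂ × ℂ × ℂ → ℂ × ℂ × ℂ)
    (hφ : φ = fun a v => (a * v.1 + 2 * (1 - a) * v.2.1 + (2 + a - a ^ 2) * v.2.2,
      -v.1 + (a + 1) * v.2.2, v.1 - 2 * v.2.1 + (1 - a) * v.2.2))
    (M : ℂ × ℂ × ℂ → ℂ × ℂ × ℂ)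
    (hM : M = fun v => (v.1 + (α₀ - α) * v.2.2, v.2.1, v.2.2)) :
    ∃ c : ℂ, c ≠ 0 ∧ ∀ v : ℂ × ℂ × ℂ, M (φ α (Φ v)) = c • φ α₀ (Φ (M v)) := by
  refine ⟨1, one_ne_zero, fun v => ?_⟩
  subst hΦ hφ hM
  simp only [Prod.mk.injEq, one_smul]
  refine ⟨?_, ?_, ?_⟩ <;> ring
end

section
/- For α, α_0 ∈ C*, set M_α = diag(1, α/α_0, α²/α_0²). Then for the cubic map f(x:y:z) = (y²z : x(xz+y²) : y(xz+y²)) and the matrices φ_α = [[2α³(37i√3+3)/343, α, -2α²(5i√3+11)/49],[α²(-15+11i√3)/49, 1, -α(5i√3+11)/14],[-α(2i√3+3)/7, 0, 0]], one has φ_α ∘ f = M_α^{-1} ∘ (φ_{α_0} ∘ f) ∘ M_α as rational maps of P^2. -/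
set_option maxHeartbeats 2000000

/-- For `α, α₀ ∈ ℂ*`, set `M_α = diag(1, α/α₀, α²/α₀²)`. Then for the cubic map
`f(x:y:z) = (y²z : x(xz+y²) : y(xz+y²))` and the matrices
`φ_α = [[2α³(37i√3+3)/343, α, -2α²(5i√3+11)/49],
        [α²(-15+11i√3)/49, 1, -α(5i√3+11)/14],
        [-α(2i√3+3)/7, 0, 0]]`,
one has `φ_α ∘ f = M_α⁻¹ ∘ (φ_{α₀} ∘ f) ∘ M_α` as rational maps of `P²` (equality of rational
maps means the defining polynomial triples are proportional). -/
theorem stmt15 (α α₀ : ℂ) (hα : α ≠ 0) (hα₀ : α₀ ≠ 0)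
    (s3 : ℂ) (hs3 : s3 = Complex.I * Real.sqrt 3)
    (f : ℂ × ℂ × ℂ → ℂ × ℂ × ℂ)
    (hf : f = fun v => (v.2.1 ^ 2 * v.2.2, v.1 * (v.1 * v.2.2 + v.2.1 ^ 2),
      v.2.1 * (v.1 * v.2.2 + v.2.1 ^ 2)))
    (φ : ℂ → ℂ × ℂ × ℂ → ℂ × ℂ × ℂ)
    (hφ : φ = fun a v =>
      ((2 * a ^ 3 / 343) * (37 * s3 + 3) * v.1 + a * v.2.1
          - (2 * a ^ 2 / 49) * (5 * s3 + 11) * v.2.2,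
        (a ^ 2 / 49) * (-15 + 11 * s3) * v.1 + v.2.1 - (a / 14) * (5 * s3 + 11) * v.2.2,
        -(a / 7) * (2 * s3 + 3) * v.1))
    (M : ℂ × ℂ × ℂ → ℂ × ℂ × ℂ)
    (hM : M = fun v => (v.1, (α / α₀) * v.2.1, (α ^ 2 / α₀ ^ 2) * v.2.2)) :
    ∃ c : ℂ, c ≠ 0 ∧ ∀ v : ℂ × ℂ × ℂ, M (φ α (f v)) = c • φ α₀ (f (M v)) := by
  refine ⟨α₀ / α, div_ne_zero hα₀ hα, fun v => ?_⟩
  subst hf hφ hM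
  obtain ⟨x, y, z⟩ := v
  simp only [Prod.smul_mk, smul_eq_mul, Prod.mk.injEq]
  refine ⟨?_, ?_, ?_⟩ <;>
    [rw [div_mul_eq_mul_div α₀ α _, eq_div_iff hα];
     rw [div_mul_eq_mul_div α₀ α _, eq_div_iff hα];
     rw [div_mul_eq_mul_div α₀ α _, eq_div_iff hα]] <;> field_simp <;> ring_nf <;> field_simp <;> ring
end

section
/- For n = 5, let f_a(x:y:z) = (x z^4 : z^5 : x^5 - y z^4 + c z^5 + a x^3 z^2) for parameters a, c ∈ C. For any nonzero complex number s, with A = (x : y/s : c(1/s - s^4) y + s^4 z) and B = (s x : s^5 y : z), one has A ∘ f_a = f_{s^2 a} ∘ B as rational maps of P^2. -/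
/-- For `n = 5`, let `f_a(x:y:z) = (x z⁴ : z⁵ : x⁵ - y z⁴ + c z⁵ + a x³ z²)`. For any nonzero
complex number `s`, with `A = (x : y/s : c(1/s - s⁴) y + s⁴ z)` and `B = (s x : s⁵ y : z)`,
one has `A ∘ f_a = f_{s²a} ∘ B` as rational maps of `P²` (i.e. the defining polynomial triples
are proportional). -/
theorem stmt18 (a c s : ℂ) (hs : s ≠ 0)
    (f : ℂ → ℂ × ℂ × ℂ → ℂ × ℂ × ℂ)
    (hf : f = fun t v => (v.1 * v.2.2 ^ 4, v.2.2 ^ 5,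
      v.1 ^ 5 - v.2.1 * v.2.2 ^ 4 + c * v.2.2 ^ 5 + t * v.1 ^ 3 * v.2.2 ^ 2))
    (A : ℂ × ℂ × ℂ → ℂ × ℂ × ℂ)
    (hA : A = fun v => (v.1, v.2.1 / s, c * (1 / s - s ^ 4) * v.2.1 + s ^ 4 * v.2.2))
    (B : ℂ × ℂ × ℂ → ℂ × ℂ × ℂ)
    (hB : B = fun v => (s * v.1, s ^ 5 * v.2.1, v.2.2)) :
    ∃ k : ℂ, k ≠ 0 ∧ ∀ v : ℂ × ℂ × ℂ, A (f a v) = k • f (s ^ 2 * a) (B v) := by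
  subst hf hA hB
  refine ⟨s⁻¹, inv_ne_zero hs, fun v => ?_⟩
  simp only [Prod.smul_mk, smul_eq_mul, Prod.mk.injEq]
  refine ⟨?_, ?_, ?_⟩ <;> field_simp <;> ring
end
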